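/- arXiv:1901.00622 — 3 statements merged into one kernel-verified Lean document; each statement's English description precedes it below -/
import Mathlib

section
/- Parallel composition makes the interiors of the two branches mutually unreachable: if G is the parallel composition of series-parallel dags G₁ and G₂ (identifying the two sources and the two sinks), u is a vertex coming from G₁ that is neither the source nor the sink of G, and v is a vertex coming from G₂ that is neither the source nor the sink of G, then there is no directed path in G from u to v and no directed path from v to u. -/
/-- Reachability: there is a directed path (possibly of length zero). -/
def Reach (E : ℕ → ℕ → Prop) : ℕ → ℕ → Prop := Relation.ReflTransGen E

/-- `IsSP V E s t` : the two-terminal digraph with vertex set `V`, edge relation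
`E`, source `s` and sink `t` is a (two-terminal) series-parallel dag.
Identification of vertices in compositions is modeled by requiring the two
(otherwise disjoint) vertex sets to share exactly the identified vertices. -/
inductive IsSP : Finset ℕ → (ℕ → ℕ → Prop) → ℕ → ℕ → Prop where
  | base (s t : ℕ) (hst : s ≠ t) :
      IsSP {s, t} (fun a b => a = s ∧ b = t) s t
  | series {V₁ V₂ : Finset ℕ} {E₁ E₂ : ℕ → ℕ → Prop} {s₁ t₁ s₂ t₂ : ℕ}
      (h₁ : IsSP V₁ E₁ s₁ t₁) (h₂ : IsSP V₂ E₂ s₂ t₂)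
      (hid : t₁ = s₂) (hint : V₁ ∩ V₂ = {t₁}) :
      IsSP (V₁ ∪ V₂) (fun a b => E₁ a b ∨ E₂ a b) s₁ t₂
  | parallel {V₁ V₂ : Finset ℕ} {E₁ E₂ : ℕ → ℕ → Prop} {s t : ℕ}
      (h₁ : IsSP V₁ E₁ s t) (h₂ : IsSP V₂ E₂ s t)
      (hint : V₁ ∩ V₂ = {s, t}) :
      IsSP (V₁ ∪ V₂) (fun a b => E₁ a b ∨ E₂ a b) s t

lemma isSP_facts {V : Finset ℕ} {E : ℕ → ℕ → Prop} {s t : ℕ} (h : IsSP V E s t) :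
    s ∈ V ∧ t ∈ V ∧ s ≠ t ∧ (∀ a b, E a b → a ∈ V ∧ b ∈ V) ∧
    (∀ a, ¬ E a s) ∧ (∀ b, ¬ E t b) := by
  induction h with
  | base s t hst =>
    refine ⟨by simp, by simp, hst, ?_, ?_, ?_⟩
    · rintro a b ⟨rfl, rfl⟩; simp
    · rintro a ⟨-, h⟩; exact hst h
    · rintro b ⟨h, -⟩; exact hst h.symm
  | @series V₁ V₂ E₁ E₂ s₁ t₁ s₂ t₂ h₁ h₂ hid hint ih₁ ih₂ =>
    obtain ⟨hs₁, ht₁, hne₁, hmem₁, hin₁, hout₁⟩ := ih₁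
    obtain ⟨hs₂, ht₂, hne₂, hmem₂, hin₂, hout₂⟩ := ih₂
    subst hid
    refine ⟨Finset.mem_union_left _ hs₁, Finset.mem_union_right _ ht₂, ?_, ?_, ?_, ?_⟩
    · rintro rfl
      have : s₁ ∈ V₁ ∩ V₂ := Finset.mem_inter.2 ⟨hs₁, ht₂⟩
      rw [hint, Finset.mem_singleton] at this
      exact hne₁ this
    · rintro a b (h | h)
      · exact ⟨Finset.mem_union_left _ (hmem₁ a b h).1,
          Finset.mem_union_left _ (hmem₁ a b h).2⟩
      · exact ⟨Finset.mem_union_right _ (hmem₂ a b h).1,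
          Finset.mem_union_right _ (hmem₂ a b h).2⟩
    · rintro a (h | h)
      · exact hin₁ a h
      · have : s₁ ∈ V₁ ∩ V₂ := Finset.mem_inter.2 ⟨hs₁, (hmem₂ a s₁ h).2⟩
        rw [hint, Finset.mem_singleton] at this
        exact hne₁ this
    · rintro b (h | h)
      · have : t₂ ∈ V₁ ∩ V₂ := Finset.mem_inter.2 ⟨(hmem₁ t₂ b h).1, ht₂⟩
        rw [hint, Finset.mem_singleton] at this
        exact hne₂ this.symm
      · exact hout₂ b h
  | @parallel V₁ V₂ E₁ E₂ s t h₁ h₂ hint ih₁ ih₂ =>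
    obtain ⟨hs₁, ht₁, hne₁, hmem₁, hin₁, hout₁⟩ := ih₁
    obtain ⟨hs₂, ht₂, hne₂, hmem₂, hin₂, hout₂⟩ := ih₂
    refine ⟨Finset.mem_union_left _ hs₁, Finset.mem_union_left _ ht₁, hne₁, ?_, ?_, ?_⟩
    · rintro a b (h | h)
      · exact ⟨Finset.mem_union_left _ (hmem₁ a b h).1,
          Finset.mem_union_left _ (hmem₁ a b h).2⟩
      · exact ⟨Finset.mem_union_right _ (hmem₂ a b h).1,
          Finset.mem_union_right _ (hmem₂ a b h).2⟩
    · rintro a (h | h)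
      · exact hin₁ a h
      · exact hin₂ a h
    · rintro b (h | h)
      · exact hout₁ b h
      · exact hout₂ b h

lemma sp_reach_stays {V₁ V₂ : Finset ℕ} {E₁ E₂ : ℕ → ℕ → Prop} {s t : ℕ}
    (h₁ : IsSP V₁ E₁ s t) (h₂ : IsSP V₂ E₂ s t)
    (hint : V₁ ∩ V₂ = {s, t})
    {u v : ℕ} (hu : u ∈ V₁) (hus : u ≠ s)
    (hr : Reach (fun a b => E₁ a b ∨ E₂ a b) u v) : v ∈ V₁ ∧ v ≠ s := by
  induction hr with
  | refl => exact ⟨hu, hus⟩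
  | @tail b c hb hedge ih =>
    obtain ⟨hbV, hbs⟩ := ih
    rcases hedge with h | h
    · constructor
      · exact ((isSP_facts h₁).2.2.2.1 _ _ h).2
      · rintro rfl; exact (isSP_facts h₁).2.2.2.2.1 _ h
    · have hbV₂ := ((isSP_facts h₂).2.2.2.1 _ _ h).1
      have hmem : b ∈ V₁ ∩ V₂ := Finset.mem_inter.2 ⟨hbV, hbV₂⟩
      rw [hint, Finset.mem_insert, Finset.mem_singleton] at hmem
      rcases hmem with rfl | rfl
      · exact absurd rfl hbs
      · exact absurd h ((isSP_facts h₂).2.2.2.2.2 c)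

/-- in a parallel composition, the interiors of the two branches
are mutually unreachable. -/
theorem sp_parallel_interiors_unreachable
    {V₁ V₂ : Finset ℕ} {E₁ E₂ : ℕ → ℕ → Prop} {s t : ℕ}
    (h₁ : IsSP V₁ E₁ s t) (h₂ : IsSP V₂ E₂ s t)
    (hint : V₁ ∩ V₂ = {s, t})
    {u v : ℕ} (hu : u ∈ V₁) (hus : u ≠ s) (hut : u ≠ t)
    (hv : v ∈ V₂) (hvs : v ≠ s) (hvt : v ≠ t) :
    ¬ Reach (fun a b => E₁ a b ∨ E₂ a b) u v ∧
      ¬ Reach (fun a b => E₁ a b ∨ E₂ a b) v u := by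
  constructor
  · intro hr
    obtain ⟨hvV₁, -⟩ := sp_reach_stays h₁ h₂ hint hu hus hr
    have : v ∈ V₁ ∩ V₂ := Finset.mem_inter.2 ⟨hvV₁, hv⟩
    rw [hint, Finset.mem_insert, Finset.mem_singleton] at this
    rcases this with rfl | rfl
    · exact hvs rfl
    · exact hvt rfl
  · intro hr
    have hr' : Reach (fun a b => E₂ a b ∨ E₁ a b) v u :=
      Relation.ReflTransGen.mono (r := fun a b => E₁ a b ∨ E₂ a b) (fun a b h => Or.symm h) v u hr
    obtain ⟨huV₂, -⟩ := sp_reach_stays h₂ h₁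
      (by rw [Finset.inter_comm]; exact hint) hv hvs hr'
    have : u ∈ V₁ ∩ V₂ := Finset.mem_inter.2 ⟨hu, huV₂⟩
    rw [hint, Finset.mem_insert, Finset.mem_singleton] at this
    rcases this with rfl | rfl
    · exact hus rfl
    · exact hut rfl
end

section
/- In a parallel composition, paths starting strictly inside one branch stay in that branch until they reach the sink: if G is the parallel composition of series-parallel dags G₁ and G₂, u is a vertex coming from G₁ that is neither the source nor the sink of G, and p is a directed path in G starting at u, then every vertex of p except possibly its last vertex comes from G₁, and p can only leave the vertices of G₁ by ending at the sink t(G). -/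
namespace IsSP

variable {V : Finset ℕ} {E : ℕ → ℕ → Prop} {s t : ℕ}

lemma source_mem (h : IsSP V E s t) : s ∈ V := by
  induction h with
  | base => simp
  | series _ _ _ _ ih₁ => exact Finset.mem_union_left _ ih₁
  | parallel _ _ _ ih₁ => exact Finset.mem_union_left _ ih₁

lemma sink_mem (h : IsSP V E s t) : t ∈ V := by
  induction h with
  | base => simp
  | series _ _ _ _ _ ih₂ => exact Finset.mem_union_right _ ih₂
  | parallel _ _ _ ih₁ => exact Finset.mem_union_left _ ih₁

lemma mem_of_edge (h : IsSP V E s t) {a b : ℕ} (hab : E a b) : a ∈ V ∧ b ∈ V := by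
  induction h with
  | base => obtain ⟨rfl, rfl⟩ := hab; simp
  | series _ _ _ _ ih₁ ih₂ | parallel _ _ _ ih₁ ih₂ =>
      rcases hab with hab | hab
      · exact ⟨Finset.mem_union_left _ (ih₁ hab).1, Finset.mem_union_left _ (ih₁ hab).2⟩
      · exact ⟨Finset.mem_union_right _ (ih₂ hab).1, Finset.mem_union_right _ (ih₂ hab).2⟩

lemma source_ne_sink (h : IsSP V E s t) : s ≠ t := by
  induction h with
  | base _ _ hst => exact hst
  | series h₁ h₂ _ hint ih₁ =>
      intro hst
      have hshared := Finset.mem_inter.2 ⟨h₁.source_mem, hst ▸ h₂.sink_mem⟩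
      rw [hint, Finset.mem_singleton] at hshared
      exact ih₁ hshared
  | parallel _ _ _ ih₁ => exact ih₁

lemma not_edge_to_source (h : IsSP V E s t) {a : ℕ} : ¬ E a s := by
  induction h with
  | base _ _ hst => rintro ⟨_, rfl⟩; exact hst rfl
  | series h₁ h₂ _ hint ih₁ =>
      rintro (hab | hab)
      · exact ih₁ hab
      · have hshared := Finset.mem_inter.2 ⟨h₁.source_mem, (h₂.mem_of_edge hab).2⟩
        rw [hint, Finset.mem_singleton] at hshared
        exact h₁.source_ne_sink hshared
  | parallel _ _ _ ih₁ ih₂ => rintro (hab | hab) <;> [exact ih₁ hab; exact ih₂ hab]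

lemma not_edge_from_sink (h : IsSP V E s t) {b : ℕ} : ¬ E t b := by
  induction h with
  | base _ _ hst => rintro ⟨rfl, _⟩; exact hst rfl
  | series h₁ h₂ hid hint _ ih₂ =>
      rintro (hab | hab)
      · have hshared := Finset.mem_inter.2 ⟨(h₁.mem_of_edge hab).1, h₂.sink_mem⟩
        rw [hint, Finset.mem_singleton, hid] at hshared
        exact h₂.source_ne_sink hshared.symm
      · exact ih₂ hab
  | parallel _ _ _ ih₁ ih₂ => rintro (hab | hab) <;> [exact ih₁ hab; exact ih₂ hab]

lemma parallel_edge_mem_left_ne_source {V₁ V₂ : Finset ℕ} {E₁ E₂ : ℕ → ℕ → Prop}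
    (h₁ : IsSP V₁ E₁ s t) (h₂ : IsSP V₂ E₂ s t) (hint : V₁ ∩ V₂ = {s, t})
    {a b : ℕ} (hab : E₁ a b ∨ E₂ a b) (ha : a ∈ V₁ ∧ a ≠ s) : b ∈ V₁ ∧ b ≠ s := by
  rcases hab with hab | hab
  · exact ⟨(h₁.mem_of_edge hab).2, fun hbs => h₁.not_edge_to_source (hbs ▸ hab)⟩
  · have hshared := Finset.mem_inter.2 ⟨ha.1, (h₂.mem_of_edge hab).1⟩
    rw [hint, Finset.mem_insert, Finset.mem_singleton] at hshared
    obtain rfl := hshared.resolve_left ha.2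
    exact absurd hab h₂.not_edge_from_sink

end IsSP

theorem sp_parallel_path_stays_in_branch_general
    {V₁ V₂ : Finset ℕ} {E₁ E₂ : ℕ → ℕ → Prop} {s t : ℕ}
    (h₁ : IsSP V₁ E₁ s t) (h₂ : IsSP V₂ E₂ s t)
    (hint : V₁ ∩ V₂ = {s, t})
    {u : ℕ} (hu : u ∈ V₁) (hus : u ≠ s)
    (p : List ℕ) (hp : p ≠ [])
    (hchain : List.Chain' (fun a b => E₁ a b ∨ E₂ a b) p)
    (hhead : p.head hp = u) :
    (∀ x ∈ p.dropLast, x ∈ V₁) ∧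
      (p.getLast hp ∈ V₁ ∨ p.getLast hp = t) := by
  have hmem : ∀ x ∈ p, x ∈ V₁ ∧ x ≠ s :=
    hchain.induction _ _ (fun _ _ hab => IsSP.parallel_edge_mem_left_ne_source h₁ h₂ hint hab)
      fun _ => hhead ▸ ⟨hu, hus⟩
  exact ⟨fun x hx => (hmem x (List.dropLast_subset p hx)).1,
    Or.inl (hmem _ (List.getLast_mem hp)).1⟩

/-- in a parallel composition, a directed path starting strictly
inside the first branch has all its vertices (except possibly the last) in the
first branch, and it can only leave the first branch by ending at the sink. -/
theorem sp_parallel_path_stays_in_branch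
    {V₁ V₂ : Finset ℕ} {E₁ E₂ : ℕ → ℕ → Prop} {s t : ℕ}
    (h₁ : IsSP V₁ E₁ s t) (h₂ : IsSP V₂ E₂ s t)
    (hint : V₁ ∩ V₂ = {s, t})
    {u : ℕ} (hu : u ∈ V₁) (hus : u ≠ s) (hut : u ≠ t)
    (p : List ℕ) (hp : p ≠ [])
    (hchain : List.Chain' (fun a b => E₁ a b ∨ E₂ a b) p)
    (hhead : p.head hp = u) :
    (∀ x ∈ p.dropLast, x ∈ V₁) ∧
      (p.getLast hp ∈ V₁ ∨ p.getLast hp = t) :=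
  sp_parallel_path_stays_in_branch_general h₁ h₂ hint hu hus p hp hchain hhead
end

section
/- Reachability localizes to a single-entry single-exit region: let H be a finite directed acyclic graph, Q a set of vertices of H, and s, t ∈ Q vertices such that every edge of H entering Q from outside has head s, every edge of H leaving Q has tail t, and there is a directed path from s to t using only vertices of Q. Then for all u, v ∈ Q, if there is a directed path in H from u to v, there is a directed path from u to v all of whose vertices lie in Q. -/
/-- Reachability by a directed path all of whose vertices lie in `Q`. -/
def ReachIn (E : ℕ → ℕ → Prop) (Q : Finset ℕ) : ℕ → ℕ → Prop :=
  Relation.ReflTransGen (fun a b => E a b ∧ a ∈ Q ∧ b ∈ Q)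

/-- `H` is a finite directed acyclic graph: an irreflexive edge relation `E` on
the finite vertex set `V`, with no nonempty directed cycle. -/
structure IsFinDag (V : Finset ℕ) (E : ℕ → ℕ → Prop) : Prop where
  edge_mem : ∀ a b, E a b → a ∈ V ∧ b ∈ V
  irrefl : ∀ a, ¬ E a a
  acyclic : ∀ a, ¬ Relation.TransGen E a a

/-- If a vertex outside `Q` reaches a vertex of `Q`, it reaches the unique
entry point `s` by a nonempty path. -/
lemma reach_exits_to_entry {E : ℕ → ℕ → Prop} {Q : Finset ℕ} {s v : ℕ}
    (hentry : ∀ a b, E a b → a ∉ Q → b ∈ Q → b = s)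
    (hv : v ∈ Q) :
    ∀ a, Relation.ReflTransGen E a v → a ∉ Q → Relation.TransGen E a s := by
  intro a hav
  induction hav using Relation.ReflTransGen.head_induction_on with
  | refl => intro h; exact absurd hv h
  | head hab hbv ih =>
    rename_i a b
    intro haQ
    by_cases hbQ : b ∈ Q
    · have := hentry a b hab haQ hbQ
      subst this
      exact Relation.TransGen.single hab
    · exact Relation.TransGen.head hab (ih hbQ)

/-- reachability localizes to a single-entry single-exit region:
if every edge entering `Q` has head `s`, every edge leaving `Q` has tail `t`,
and `t` is reachable from `s` inside `Q`, then any two vertices of `Q` joined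
by a directed path in `H` are joined by a directed path lying in `Q`. -/
theorem dag_reach_localizes
    {V : Finset ℕ} {E : ℕ → ℕ → Prop} (hH : IsFinDag V E)
    (Q : Finset ℕ) (s t : ℕ) (hs : s ∈ Q) (ht : t ∈ Q)
    (hentry : ∀ a b, E a b → a ∉ Q → b ∈ Q → b = s)
    (hexit : ∀ a b, E a b → a ∈ Q → b ∉ Q → a = t)
    (hst : ReachIn E Q s t) :
    ∀ u ∈ Q, ∀ v ∈ Q, Reach E u v → ReachIn E Q u v := by
  intro u hu v hv huv
  have hst' : Relation.ReflTransGen E s t :=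
    Relation.ReflTransGen.mono (fun a b (h : E a b ∧ a ∈ Q ∧ b ∈ Q) => h.1) s t hst
  induction huv using Relation.ReflTransGen.head_induction_on with
  | refl => exact Relation.ReflTransGen.refl
  | head hab hbv ih =>
    rename_i a b
    by_cases hbQ : b ∈ Q
    · exact Relation.ReflTransGen.head ⟨hab, hu, hbQ⟩ (ih hbQ)
    · -- the path leaves Q: the tail is t, and re-entry at s closes a cycle
      have hat : a = t := hexit a b hab hu hbQ
      have hbs : Relation.TransGen E b s :=
        reach_exits_to_entry hentry hv b hbv hbQ
      have : Relation.TransGen E a a :=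
        (Relation.TransGen.head hab hbs).trans_left (hat ▸ hst')
      exact absurd this (hH.acyclic a)
end
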